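/- (Unisolvence of quadratic Lagrange interpolation on a simplex) Let m ≥ 1 and let v_0, v_1, …, v_m ∈ ℝ^m be affinely independent points (the vertices of a nondegenerate m-simplex). Let N = {v_i : 0 ≤ i ≤ m} ∪ {(v_i + v_j)/2 : 0 ≤ i < j ≤ m} be the set consisting of the vertices together with the midpoints of all edges. Then for every function g : N → ℝ there exists a unique polynomial p in m variables of total degree at most 2 such that p(n) = g(n) for all n ∈ N. -/

import Mathlib

open Set

noncomputable section

/-! The barycentric coordinates `λᵢ` of the simplex are affine, hence polynomials of degree at
most one; since `∑ λᵢ = 1` and every `Xₖ` is a combination of the `λᵢ`, the products `λᵢ λⱼ`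
span all polynomials of degree at most two. So do the Lagrange polynomials `λᵢ (2 λᵢ - 1)` and
`4 λᵢ λⱼ` (`i ≠ j`), and these are dual to the nodes: at the node `(v_a + v_c) / 2` each `λᵢ`
equals `([i = a] + [i = c]) / 2`. Hence every quadratic is the sum of its node values times the
Lagrange polynomials, which gives existence and uniqueness at once. -/

open MvPolynomial Finset Submodule

theorem eq_sum_smul_of_mem_span_of_biorthogonal {R M ι : Type*} [Semiring R] [AddCommMonoid M]
    [Module R M] [Fintype ι] [DecidableEq ι] {F : ι → M} {e : ι → M →ₗ[R] R}
    (he : ∀ s t, e t (F s) = if s = t then 1 else 0) {q : M} (hq : q ∈ span R (range F)) :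
    q = ∑ s, e s q • F s := by
  obtain ⟨c, rfl⟩ := (mem_span_range_iff_exists_fun R).mp hq
  simp [map_sum, he]

namespace MvPolynomial

section Degree

variable {σ R : Type*} [CommSemiring R] {P : Submodule R (MvPolynomial σ R)}

theorem monomial_one_mem_pow (h1 : 1 ∈ P) (hX : ∀ i, X i ∈ P) {n : ℕ} {d : σ →₀ ℕ}
    (hd : d.degree ≤ n) : monomial d (1 : R) ∈ P ^ n := by
  induction n generalizing d with
  | zero =>
    rw [nonpos_iff_eq_zero, Finsupp.degree_eq_zero_iff] at hd
    subst hd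
    exact mem_one.mpr ⟨1, by simp⟩
  | succ n ih =>
    rw [Submodule.pow_succ]
    by_cases hd0 : d = 0
    · subst hd0
      simpa using Submodule.mul_mem_mul (ih (d := 0) (by simp)) h1
    obtain ⟨i, hi⟩ := Finsupp.ne_iff.mp hd0
    have hle : Finsupp.single i 1 ≤ d := by
      simpa [Finsupp.single_le_iff, Nat.one_le_iff_ne_zero] using hi
    have hdeg := map_add Finsupp.degree (d - Finsupp.single i 1) (Finsupp.single i 1)
    rw [tsub_add_cancel_of_le hle, Finsupp.degree_single] at hdeg
    have hsplit : monomial d (1 : R) = monomial (d - Finsupp.single i 1) 1 * X i := by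
      rw [X, monomial_mul, one_mul, tsub_add_cancel_of_le hle]
    rw [hsplit]
    exact Submodule.mul_mem_mul (ih (by omega)) (hX i)

theorem restrictTotalDegree_le_pow (h1 : 1 ∈ P) (hX : ∀ i, X i ∈ P) (n : ℕ) :
    restrictTotalDegree σ R n ≤ P ^ n := by
  intro p hp
  rw [mem_restrictTotalDegree] at hp
  rw [p.as_sum]
  refine sum_mem fun d hd => ?_
  rw [← mul_one (coeff d p), ← smul_eq_mul, ← smul_monomial]
  exact smul_mem _ _ (monomial_one_mem_pow h1 hX ((le_totalDegree hd).trans hp))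

end Degree

variable {σ R : Type*} [Fintype σ] [DecidableEq σ] [CommRing R]

def ofAffineMap (f : (σ → R) →ᵃ[R] R) : MvPolynomial σ R :=
  C (f 0) + ∑ j, f.linear (Pi.single j 1) • X j

@[simp]
theorem eval_ofAffineMap (f : (σ → R) →ᵃ[R] R) (x : σ → R) :
    eval x (ofAffineMap f) = f x := by
  have hlin : f.linear x = f x - f 0 := by simpa using f.linearMap_vsub x 0
  rw [← sub_add_cancel (f x) (f 0), ← hlin]
  conv_rhs => rw [pi_eq_sum_univ' x]
  simp [ofAffineMap, mul_comm, add_comm]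

theorem totalDegree_ofAffineMap_le (f : (σ → R) →ᵃ[R] R) :
    (ofAffineMap f).totalDegree ≤ 1 := by
  refine (totalDegree_add _ _).trans (max_le (by simp) ?_)
  refine (totalDegree_finsetSum _ _).trans (Finset.sup_le fun j _ => ?_)
  exact (totalDegree_smul_le _ _).trans ((totalDegree_monomial_le _ _).trans (by simp))

end MvPolynomial

namespace AffineBasis

section Midpoint

variable {ι k V P : Type*} [Field k] [Invertible (2 : k)] [AddCommGroup V] [Module k V]
  [AddTorsor V P] (b : AffineBasis ι k P)

theorem coord_midpoint [DecidableEq ι] (l i j : ι) :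
    b.coord l (midpoint k (b i) (b j)) =
      ((if l = i then 1 else 0) + (if l = j then 1 else 0)) / 2 := by
  rw [AffineMap.map_midpoint, b.coord_apply, b.coord_apply, midpoint_eq_smul_add, smul_eq_mul,
    invOf_eq_inv]
  ring

-- The diagonal `s(i, i)` indexes the vertex `b i`, the other unordered pairs the edge midpoints.
def quadraticNode : Sym2 ι → P :=
  Sym2.lift ⟨fun i j => midpoint k (b i) (b j), fun _ _ => midpoint_comm _ _⟩

theorem range_quadraticNode [LinearOrder ι] :
    range b.quadraticNode =
      range b ∪ {x | ∃ i j : ι, i < j ∧ x = midpoint k (b i) (b j)} := by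
  ext x
  constructor
  · rintro ⟨s, rfl⟩
    induction s using Sym2.ind with | h i j => ?_
    rcases lt_trichotomy i j with h | rfl | h
    · exact Or.inr ⟨i, j, h, rfl⟩
    · exact Or.inl ⟨i, (midpoint_self k (b i)).symm⟩
    · exact Or.inr ⟨j, i, h, midpoint_comm _ _⟩
  · rintro (⟨i, rfl⟩ | ⟨i, j, -, rfl⟩)
    · exact ⟨s(i, i), midpoint_self k (b i)⟩
    · exact ⟨s(i, j), rfl⟩

end Midpoint

variable {ι σ : Type*} [Fintype σ] [DecidableEq σ] (b : AffineBasis ι ℝ (σ → ℝ))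

def coordPoly (i : ι) : MvPolynomial σ ℝ := ofAffineMap (b.coord i)

@[simp]
theorem eval_coordPoly (i : ι) (x : σ → ℝ) : eval x (b.coordPoly i) = b.coord i x :=
  eval_ofAffineMap _ _

theorem totalDegree_coordPoly_le (i : ι) : (b.coordPoly i).totalDegree ≤ 1 :=
  totalDegree_ofAffineMap_le _

theorem sum_coordPoly [Fintype ι] : ∑ i, b.coordPoly i = 1 :=
  MvPolynomial.funext fun x => by simp [b.sum_coord_apply_eq_one]

theorem sum_smul_coordPoly [Fintype ι] (k : σ) : ∑ i, b i k • b.coordPoly i = X k :=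
  MvPolynomial.funext fun x => by
    simpa [mul_comm] using congrFun (b.linear_combination_coord_eq_self x) k

variable [DecidableEq ι]

def quadraticLagrange : Sym2 ι → MvPolynomial σ ℝ :=
  Sym2.lift ⟨fun i j => if i = j then b.coordPoly i * ((2 : ℝ) • b.coordPoly i - 1)
    else (4 : ℝ) • (b.coordPoly i * b.coordPoly j), by
    intro i j
    by_cases h : i = j
    · subst h
      rfl
    · simp only [h, Ne.symm h, if_false, mul_comm]⟩

theorem quadraticLagrange_mk_self (i : ι) :
    b.quadraticLagrange s(i, i) = b.coordPoly i * ((2 : ℝ) • b.coordPoly i - 1) := if_pos rfl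

theorem quadraticLagrange_mk_of_ne {i j : ι} (h : i ≠ j) :
    b.quadraticLagrange s(i, j) = (4 : ℝ) • (b.coordPoly i * b.coordPoly j) := if_neg h

theorem totalDegree_quadraticLagrange_le (s : Sym2 ι) :
    (b.quadraticLagrange s).totalDegree ≤ 2 := by
  induction s using Sym2.ind with | h i j => ?_
  have hi := b.totalDegree_coordPoly_le i
  have hj := b.totalDegree_coordPoly_le j
  by_cases h : i = j
  · subst h
    rw [quadraticLagrange_mk_self]
    have h2 : ((2 : ℝ) • b.coordPoly i - 1).totalDegree ≤ 1 :=
      (totalDegree_sub _ _).trans (max_le ((totalDegree_smul_le _ _).trans hi) (by simp))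
    exact (totalDegree_mul _ _).trans (by omega)
  · rw [quadraticLagrange_mk_of_ne b h]
    exact (totalDegree_smul_le _ _).trans ((totalDegree_mul _ _).trans (by omega))

theorem eval_quadraticNode_quadraticLagrange (s t : Sym2 ι) :
    eval (b.quadraticNode t) (b.quadraticLagrange s) = if s = t then 1 else 0 := by
  induction s using Sym2.ind with | h i j => ?_
  induction t using Sym2.ind with | h a c => ?_
  simp only [quadraticNode, quadraticLagrange, Sym2.lift_mk, Sym2.eq_iff]
  -- each `λ` is `0`, `1 / 2` or `1` at the node, so what remains is a finite case check
  split_ifs <;> simp only [map_mul, map_sub, map_one, smul_eval, eval_coordPoly, coord_midpoint] <;>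
    split_ifs <;> simp_all <;> norm_num

variable [Fintype ι]

theorem coordPoly_mul_mem_span (i j : ι) :
    b.coordPoly i * b.coordPoly j ∈ span ℝ (range b.quadraticLagrange) := by
  have hne {i j : ι} (h : i ≠ j) :
      b.coordPoly i * b.coordPoly j ∈ span ℝ (range b.quadraticLagrange) := by
    have : b.coordPoly i * b.coordPoly j = (4 : ℝ)⁻¹ • b.quadraticLagrange s(i, j) := by
      rw [quadraticLagrange_mk_of_ne b h, smul_smul]
      norm_num
    rw [this]
    exact smul_mem _ _ (subset_span (mem_range_self _))
  rcases eq_or_ne i j with rfl | h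
  · have hrest : ∑ j ∈ univ.erase i, b.coordPoly j = 1 - b.coordPoly i := by
      rw [← b.sum_coordPoly, ← add_sum_erase univ _ (mem_univ i), add_sub_cancel_left]
    have hsplit : b.coordPoly i * b.coordPoly i =
        b.quadraticLagrange s(i, i) + ∑ j ∈ univ.erase i, b.coordPoly i * b.coordPoly j := by
      rw [← mul_sum, hrest, quadraticLagrange_mk_self, two_smul]
      ring
    rw [hsplit]
    exact add_mem (subset_span (mem_range_self _))
      (sum_mem fun j hj => hne (ne_of_mem_erase hj).symm)
  · exact hne h

theorem restrictTotalDegree_two_le_span_quadraticLagrange :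
    restrictTotalDegree σ ℝ 2 ≤ span ℝ (range b.quadraticLagrange) := by
  have h1 : 1 ∈ span ℝ (range b.coordPoly) := by
    rw [← b.sum_coordPoly]
    exact sum_mem fun i _ => subset_span (mem_range_self i)
  have hX (k : σ) : X k ∈ span ℝ (range b.coordPoly) := by
    rw [← b.sum_smul_coordPoly k]
    exact sum_mem fun i _ => smul_mem _ _ (subset_span (mem_range_self i))
  refine (restrictTotalDegree_le_pow h1 hX 2).trans ?_
  rw [pow_two, span_mul_span, span_le]
  rintro _ ⟨_, ⟨i, rfl⟩, _, ⟨j, rfl⟩, rfl⟩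
  exact b.coordPoly_mul_mem_span i j

theorem eq_sum_eval_smul_quadraticLagrange {q : MvPolynomial σ ℝ} (hq : q.totalDegree ≤ 2) :
    q = ∑ s, eval (b.quadraticNode s) q • b.quadraticLagrange s :=
  eq_sum_smul_of_mem_span_of_biorthogonal (e := fun s => (aeval (b.quadraticNode s)).toLinearMap)
    b.eval_quadraticNode_quadraticLagrange
    (b.restrictTotalDegree_two_le_span_quadraticLagrange ((mem_restrictTotalDegree _ _ _).mpr hq))

theorem eval_quadraticNode_sum_smul (c : Sym2 ι → ℝ) (t : Sym2 ι) :
    eval (b.quadraticNode t) (∑ s, c s • b.quadraticLagrange s) = c t := by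
  simp [map_sum, smul_eval, eval_quadraticNode_quadraticLagrange]

theorem existsUnique_quadratic_interpolation (g : range b.quadraticNode → ℝ) :
    ∃! p : MvPolynomial σ ℝ,
      p.totalDegree ≤ 2 ∧ ∀ n : range b.quadraticNode, eval (n : σ → ℝ) p = g n := by
  let c (s : Sym2 ι) := g ⟨b.quadraticNode s, mem_range_self s⟩
  refine ⟨∑ s, c s • b.quadraticLagrange s, ⟨?_, ?_⟩, ?_⟩
  · exact (totalDegree_finsetSum _ _).trans (Finset.sup_le fun s _ =>
      (totalDegree_smul_le _ _).trans (b.totalDegree_quadraticLagrange_le s))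
  · rintro ⟨_, t, rfl⟩
    exact b.eval_quadraticNode_sum_smul c t
  · rintro q ⟨hq, hqg⟩
    refine (b.eq_sum_eval_smul_quadraticLagrange hq).trans (sum_congr rfl fun s _ => ?_)
    rw [hqg ⟨_, mem_range_self s⟩]

end AffineBasis

theorem quadratic_lagrange_unisolvence_general {m : ℕ}
    (v : Fin (m + 1) → (Fin m → ℝ)) (hv : AffineIndependent ℝ v)
    (N : Set (Fin m → ℝ))
    (hN : N = Set.range v ∪
      {x | ∃ i j : Fin (m + 1), i < j ∧ x = midpoint ℝ (v i) (v j)}) :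
    ∀ g : N → ℝ, ∃! p : MvPolynomial (Fin m) ℝ,
      p.totalDegree ≤ 2 ∧ ∀ n : N, MvPolynomial.eval (n : Fin m → ℝ) p = g n := by
  intro g
  have htot : affineSpan ℝ (range v) = ⊤ :=
    hv.affineSpan_eq_top_iff_card_eq_finrank_add_one.mpr (by simp)
  let b : AffineBasis (Fin (m + 1)) ℝ (Fin m → ℝ) := ⟨v, hv, htot⟩
  have hNb : N = range b.quadraticNode := by
    rw [hN, b.range_quadraticNode]
    rfl
  subst hNb
  exact b.existsUnique_quadratic_interpolation g

/-- **Unisolvence of quadratic Lagrange interpolation on a simplex**: given affinely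
independent points `v 0, …, v m` in `ℝ^m` (`m ≥ 1`), and the node set `N` consisting of
the vertices together with the midpoints of all edges, every real-valued function on `N`
is interpolated by a unique polynomial in `m` variables of total degree at most `2`. -/
theorem quadratic_lagrange_unisolvence {m : ℕ} (hm : 1 ≤ m)
    (v : Fin (m + 1) → (Fin m → ℝ)) (hv : AffineIndependent ℝ v)
    (N : Set (Fin m → ℝ))
    (hN : N = Set.range v ∪
      {x | ∃ i j : Fin (m + 1), i < j ∧ x = midpoint ℝ (v i) (v j)}) :
    ∀ g : N → ℝ, ∃! p : MvPolynomial (Fin m) ℝ,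
      p.totalDegree ≤ 2 ∧ ∀ n : N, MvPolynomial.eval (n : Fin m → ℝ) p = g n :=
  quadratic_lagrange_unisolvence_general v hv N hN
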